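/- Let (G,𝓕) be a B_n-generalized pseudo-Kähler structure on an odd exact Courant algebroid E over an n-dimensional manifold M. Then any two B_n-Kähler generalized connections D, D̃ (i.e. torsion-free generalized connections with DG=0 and D𝓕=0) are related by D̃ = D + Re(sk(η₊ + η₋)) for some η_± ∈ Γ(S²E_{±,𝓕}* ⊗ Ē_{±,𝓕}*), where E_{±,𝓕} := E_±^ℂ ∩ L. -/

import Mathlib

/-! Common framework: Courant algebroids over a smooth manifold, described through
their fibers, their (smooth) sections, scalar product, anchor and Dorfman bracket;
generalized connections, torsion, generalized metrics, `Bₙ`-generalized almost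
complex structures on odd exact Courant algebroids, and generalized complex
structures on Courant algebroids of even rank. -/

open Manifold

noncomputable section

/-- A bilinear symmetric form on a real vector space has signature `(p, q)`. -/
def BilinSignature {V : Type*} [AddCommGroup V] [Module ℝ V]
    (g : V →ₗ[ℝ] V →ₗ[ℝ] ℝ) (p q : ℕ) : Prop :=
  ∃ P N : Submodule ℝ V, IsCompl P N ∧
    (∀ v ∈ P, ∀ w ∈ N, g v w = 0) ∧
    Module.finrank ℝ P = p ∧ Module.finrank ℝ N = q ∧
    (∀ v ∈ P, v ≠ 0 → 0 < g v v) ∧ (∀ v ∈ N, v ≠ 0 → g v v < 0)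

/-- The derivative `(π(u)f)(x)` of a function `f` in the direction of a tangent vector. -/
def mdirDeriv {m : ℕ} {M : Type*} [TopologicalSpace M]
    [ChartedSpace (EuclideanSpace ℝ (Fin m)) M]
    [IsManifold (𝓡 m) ((⊤ : ℕ∞) : WithTop ℕ∞) M]
    (f : M → ℝ) (x : M) (v : TangentSpace (𝓡 m) x) : ℝ :=
  mfderiv (𝓡 m) 𝓘(ℝ, ℝ) f x v

/-- A Courant algebroid over an `m`-dimensional manifold `M`, presented by the data of
its fibers, its smooth sections, its fiberwise scalar product `⟨·,·⟩`, its anchor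
`π : E → TM` and its (Dorfman) bracket `[·,·]` on sections, subject to the axioms
`[u,[v,w]] = [[u,v],w] + [v,[u,w]]`, `[u,fv] = f[u,v] + (π(u)f)v`,
`π(u)⟨v,w⟩ = ⟨[u,v],w⟩ + ⟨v,[u,w]⟩` and `⟨[u,v]+[v,u],w⟩ = π(w)⟨u,v⟩`. -/
structure CourantAlgebroid (m : ℕ) (M : Type*) [TopologicalSpace M]
    [ChartedSpace (EuclideanSpace ℝ (Fin m)) M]
    [IsManifold (𝓡 m) ((⊤ : ℕ∞) : WithTop ℕ∞) M] where
  /-- the fiber of the vector bundle `E` at `x ∈ M` -/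
  Fib : M → Type
  [fibAdd : ∀ x, AddCommGroup (Fib x)]
  [fibMod : ∀ x, Module ℝ (Fib x)]
  [fibFin : ∀ x, FiniteDimensional ℝ (Fib x)]
  /-- the set `Γ(E)` of smooth sections of `E` -/
  secs : Set (∀ x, Fib x)
  secs_zero : (fun x => (0 : Fib x)) ∈ secs
  secs_add : ∀ {u v}, u ∈ secs → v ∈ secs → (fun x => u x + v x) ∈ secs
  secs_neg : ∀ {u}, u ∈ secs → (fun x => -(u x)) ∈ secs
  secs_smul : ∀ {f : M → ℝ}, ContMDiff (𝓡 m) 𝓘(ℝ, ℝ) (⊤ : ℕ∞) f →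
    ∀ {u}, u ∈ secs → (fun x => f x • u x) ∈ secs
  /-- the scalar product `⟨·,·⟩` -/
  g : ∀ x, Fib x →ₗ[ℝ] Fib x →ₗ[ℝ] ℝ
  g_symm : ∀ x u v, g x u v = g x v u
  g_nondeg : ∀ x (v : Fib x), (∀ w, g x v w = 0) → v = 0
  g_smooth : ∀ {u v}, u ∈ secs → v ∈ secs →
    ContMDiff (𝓡 m) 𝓘(ℝ, ℝ) (⊤ : ℕ∞) (fun x => g x (u x) (v x))
  /-- the anchor `π : E → TM` -/
  anchor : ∀ x, Fib x →ₗ[ℝ] TangentSpace (𝓡 m) x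
  anchor_smooth : ∀ {u}, u ∈ secs →
    ContMDiff (𝓡 m) (𝓡 m).tangent (⊤ : ℕ∞)
      (fun x => (⟨x, anchor x (u x)⟩ : TangentBundle (𝓡 m) M))
  /-- the Dorfman bracket `[·,·]` -/
  bracket : (∀ x, Fib x) → (∀ x, Fib x) → (∀ x, Fib x)
  bracket_secs : ∀ {u v}, u ∈ secs → v ∈ secs → bracket u v ∈ secs
  bracket_add_left : ∀ {u v w}, u ∈ secs → v ∈ secs → w ∈ secs →
    bracket (fun x => u x + v x) w = fun x => bracket u w x + bracket v w x
  bracket_add_right : ∀ {u v w}, u ∈ secs → v ∈ secs → w ∈ secs →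
    bracket u (fun x => v x + w x) = fun x => bracket u v x + bracket u w x
  bracket_smul_left : ∀ (c : ℝ) {u v}, u ∈ secs → v ∈ secs →
    bracket (fun x => c • u x) v = fun x => c • bracket u v x
  bracket_smul_right : ∀ (c : ℝ) {u v}, u ∈ secs → v ∈ secs →
    bracket u (fun x => c • v x) = fun x => c • bracket u v x
  /-- `[u,[v,w]] = [[u,v],w] + [v,[u,w]]` -/
  jacobi : ∀ {u v w}, u ∈ secs → v ∈ secs → w ∈ secs →
    bracket u (bracket v w)
      = fun x => bracket (bracket u v) w x + bracket v (bracket u w) x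
  /-- `[u,fv] = f[u,v] + (π(u)f) v` -/
  leibniz : ∀ {f : M → ℝ}, ContMDiff (𝓡 m) 𝓘(ℝ, ℝ) (⊤ : ℕ∞) f → ∀ {u v},
    u ∈ secs → v ∈ secs →
    bracket u (fun x => f x • v x)
      = fun x => f x • bracket u v x
          + mdirDeriv f x (anchor x (u x)) • v x
  /-- `π(u)⟨v,w⟩ = ⟨[u,v],w⟩ + ⟨v,[u,w]⟩` -/
  compat : ∀ {u v w}, u ∈ secs → v ∈ secs → w ∈ secs → ∀ x,
    mdirDeriv (fun y => g y (v y) (w y)) x (anchor x (u x))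
      = g x (bracket u v x) (w x) + g x (v x) (bracket u w x)
  /-- `⟨[u,v]+[v,u],w⟩ = π(w)⟨u,v⟩` -/
  symBracket : ∀ {u v w}, u ∈ secs → v ∈ secs → w ∈ secs → ∀ x,
    g x (bracket u v x + bracket v u x) (w x)
      = mdirDeriv (fun y => g y (u y) (v y)) x (anchor x (w x))

attribute [instance] CourantAlgebroid.fibAdd CourantAlgebroid.fibMod CourantAlgebroid.fibFin

/-- An odd exact Courant algebroid over an `n`-dimensional manifold: a Courant algebroid
of rank `2n+1` whose scalar product has signature `(n+1, n)`. -/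
structure OddExactCourantAlgebroid (n : ℕ) (M : Type*) [TopologicalSpace M]
    [ChartedSpace (EuclideanSpace ℝ (Fin n)) M]
    [IsManifold (𝓡 n) ((⊤ : ℕ∞) : WithTop ℕ∞) M]
    extends CourantAlgebroid n M where
  rank_eq : ∀ x, Module.finrank ℝ (Fib x) = 2 * n + 1
  g_sig : ∀ x, BilinSignature (g x) (n + 1) n

variable {m : ℕ} {M : Type*} [TopologicalSpace M]
  [ChartedSpace (EuclideanSpace ℝ (Fin m)) M]
  [IsManifold (𝓡 m) ((⊤ : ℕ∞) : WithTop ℕ∞) M]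

/-- A generalized connection `D` on a Courant algebroid: `D_v (f u) = (π(v)f) u + f D_v u`
and `π(w)⟨u,v⟩ = ⟨D_w u, v⟩ + ⟨u, D_w v⟩`; moreover `D_v u` is tensorial
(`C^∞(M)`-linear) in the direction `v`. `D.D v u` denotes `D_v u`. -/
structure GenConnection (E : CourantAlgebroid m M) where
  D : (∀ x, E.Fib x) → (∀ x, E.Fib x) → (∀ x, E.Fib x)
  d_secs : ∀ {v u}, v ∈ E.secs → u ∈ E.secs → D v u ∈ E.secs
  add_dir : ∀ {v w u}, v ∈ E.secs → w ∈ E.secs → u ∈ E.secs →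
    D (fun x => v x + w x) u = fun x => D v u x + D w u x
  smul_dir : ∀ {f : M → ℝ}, ContMDiff (𝓡 m) 𝓘(ℝ, ℝ) (⊤ : ℕ∞) f → ∀ {v u},
    v ∈ E.secs → u ∈ E.secs →
    D (fun x => f x • v x) u = fun x => f x • D v u x
  add_sec : ∀ {v u w}, v ∈ E.secs → u ∈ E.secs → w ∈ E.secs →
    D v (fun x => u x + w x) = fun x => D v u x + D v w x
  smul_sec : ∀ (c : ℝ) {v u}, v ∈ E.secs → u ∈ E.secs →
    D v (fun x => c • u x) = fun x => c • D v u x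
  leibniz : ∀ {f : M → ℝ}, ContMDiff (𝓡 m) 𝓘(ℝ, ℝ) (⊤ : ℕ∞) f → ∀ {v u},
    v ∈ E.secs → u ∈ E.secs →
    D v (fun x => f x • u x)
      = fun x => mdirDeriv f x (E.anchor x (v x)) • u x + f x • D v u x
  metric : ∀ {u v w}, u ∈ E.secs → v ∈ E.secs → w ∈ E.secs → ∀ x,
    mdirDeriv (fun y => E.g y (u y) (v y)) x (E.anchor x (w x))
      = E.g x (D w u x) (v x) + E.g x (u x) (D w v x)

namespace GenConnection

variable {E : CourantAlgebroid m M}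

/-- The torsion `T^D(u,v,w) = ⟨D_u v − D_v u − [u,v], w⟩ + ⟨D_w u, v⟩` of a generalized
connection. -/
def torsion (D : GenConnection E) (u v w : ∀ x, E.Fib x) : M → ℝ :=
  fun x => E.g x (D.D u v x - D.D v u x - E.bracket u v x) (w x) + E.g x (D.D w u x) (v x)

/-- A generalized connection is torsion-free if its torsion vanishes. -/
def TorsionFree (D : GenConnection E) : Prop :=
  ∀ {u v w}, u ∈ E.secs → v ∈ E.secs → w ∈ E.secs → ∀ x, D.torsion u v w x = 0

/-- `D` preserves the endomorphism (field) `F`, i.e. `DF = 0`: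
`(D_u F) v = D_u (F v) − F (D_u v) = 0` for all sections `u`, `v`. -/
def PreservesEnd (D : GenConnection E) (F : ∀ x, E.Fib x →ₗ[ℝ] E.Fib x) : Prop :=
  ∀ {u v}, u ∈ E.secs → v ∈ E.secs → ∀ x, D.D u (fun y => F y (v y)) x = F x (D.D u v x)

/-- `D` preserves the section `s`, i.e. `Ds = 0`. -/
def PreservesSec (D : GenConnection E) (s : ∀ x, E.Fib x) : Prop :=
  ∀ {v}, v ∈ E.secs → ∀ x, D.D v s x = 0

end GenConnection

/-- The i-eigenbundle `L ⊂ E^ℂ` of a family `F` of endomorphisms has its space of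
sections closed under the (complexified) Dorfman bracket.  A complex section
`s = u + iv` of `E^ℂ` lies in `Γ(L)` iff `F u = -v` and `F v = u`; the bracket of
`u + iv` and `u' + iv'` is `([u,u'] - [v,v']) + i([u,v'] + [v,u'])`. -/
def CourantAlgebroid.IntegrableF (E : CourantAlgebroid m M)
    (F : ∀ x, E.Fib x →ₗ[ℝ] E.Fib x) : Prop :=
  ∀ {u v u' v'}, u ∈ E.secs → v ∈ E.secs → u' ∈ E.secs → v' ∈ E.secs →
    (∀ x, F x (u x) = -(v x)) → (∀ x, F x (v x) = u x) →
    (∀ x, F x (u' x) = -(v' x)) → (∀ x, F x (v' x) = u' x) →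
    (∀ x, F x (E.bracket u u' x - E.bracket v v' x)
        = -(E.bracket u v' x + E.bracket v u' x)) ∧
    (∀ x, F x (E.bracket u v' x + E.bracket v u' x)
        = E.bracket u u' x - E.bracket v v' x)

/-- A generalized (admissible) metric on a Courant algebroid, described by the associated
orthogonal, `⟨·,·⟩`-symmetric involution `G^end` of `E`; its `−1`-eigenbundle `E₋`
(the subbundle defining the generalized metric) is required to have nondegenerate
scalar product and anchor restricting to an isomorphism `E₋ → TM`. -/
structure GenMetric (E : CourantAlgebroid m M) where
  Gend : ∀ x, E.Fib x →ₗ[ℝ] E.Fib x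
  smooth : ∀ {u}, u ∈ E.secs → (fun x => Gend x (u x)) ∈ E.secs
  symm : ∀ x u v, E.g x (Gend x u) v = E.g x u (Gend x v)
  invol : ∀ x v, Gend x (Gend x v) = v
  nondeg_minus : ∀ x (v : E.Fib x), Gend x v = -v →
    (∀ w, Gend x w = -w → E.g x v w = 0) → v = 0
  anchor_bij : ∀ x, Function.Bijective
    (fun v : {w : E.Fib x // Gend x w = -w} => E.anchor x v.1)

/-- `DG = 0`, i.e. `π(w) G(u,v) = G(D_w u, v) + G(u, D_w v)` where
`G(u,v) = ⟨G^end u, v⟩`. -/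
def GenConnection.PreservesMetric {E : CourantAlgebroid m M}
    (D : GenConnection E) (G : GenMetric E) : Prop :=
  ∀ {u v w}, u ∈ E.secs → v ∈ E.secs → w ∈ E.secs → ∀ x,
    mdirDeriv (fun y => E.g y (G.Gend y (u y)) (v y)) x (E.anchor x (w x))
      = E.g x (G.Gend x (D.D w u x)) (v x) + E.g x (G.Gend x (u x)) (D.D w v x)

/-- A `Bₙ`-generalized almost complex structure on an odd exact Courant algebroid `E`
over an `n`-dimensional manifold: a `⟨·,·⟩`-skew-symmetric endomorphism `𝓕` of rank `2n`
satisfying `𝓕² = −Id + (−1)ⁿ ⟨·,u₀⟩ u₀` for a section `u₀` with `⟨u₀,u₀⟩ = (−1)ⁿ`. -/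
structure BnGACS {n : ℕ} {M' : Type*} [TopologicalSpace M']
    [ChartedSpace (EuclideanSpace ℝ (Fin n)) M']
    [IsManifold (𝓡 n) ((⊤ : ℕ∞) : WithTop ℕ∞) M']
    (E : OddExactCourantAlgebroid n M') where
  F : ∀ x, E.Fib x →ₗ[ℝ] E.Fib x
  smooth : ∀ {u}, u ∈ E.secs → (fun x => F x (u x)) ∈ E.secs
  skew : ∀ x u v, E.g x (F x u) v = - E.g x u (F x v)
  u₀ : ∀ x, E.Fib x
  u₀_mem : u₀ ∈ E.secs
  u₀_norm : ∀ x, E.g x (u₀ x) (u₀ x) = (-1 : ℝ) ^ n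
  F_sq : ∀ x v, F x (F x v) = -v + ((-1 : ℝ) ^ n * E.g x v (u₀ x)) • u₀ x
  rank_F : ∀ x, Module.finrank ℝ (LinearMap.range (F x)) = 2 * n

namespace BnGACS

variable {n : ℕ} {M' : Type*} [TopologicalSpace M']
  [ChartedSpace (EuclideanSpace ℝ (Fin n)) M']
  [IsManifold (𝓡 n) ((⊤ : ℕ∞) : WithTop ℕ∞) M']
  {E : OddExactCourantAlgebroid n M'}

/-- `𝓕` applied to a section. -/
def ap (J : BnGACS E) (u : ∀ x, E.Fib x) : ∀ x, E.Fib x := fun x => J.F x (u x)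

/-- Integrability of a `Bₙ`-generalized almost complex structure: the sections of its
i-eigenbundle `L ⊂ E^ℂ` are closed under the Dorfman bracket. -/
def Integrable (J : BnGACS E) : Prop :=
  CourantAlgebroid.IntegrableF E.toCourantAlgebroid J.F

/-- `u ∈ Γ(U^⊥)`, where `U = Ker 𝓕` is spanned by `u₀`. -/
def Perp (J : BnGACS E) (u : ∀ x, E.Fib x) : Prop :=
  ∀ x, E.g x (u x) (J.u₀ x) = 0

/-- The Nijenhuis tensor `N_𝓕(u,v) = [𝓕u,𝓕v] − [u,v] − 𝓕([𝓕u,v] + [u,𝓕v])`. -/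
def Nij (J : BnGACS E) (u v : ∀ x, E.Fib x) : ∀ x, E.Fib x :=
  fun x => E.bracket (J.ap u) (J.ap v) x - E.bracket u v x
    - J.F x (E.bracket (J.ap u) v x + E.bracket u (J.ap v) x)

/-- The Dorfman-Lie derivative `(𝐋_{u₀} 𝓕) u = [u₀, 𝓕u] − 𝓕 [u₀, u]`. -/
def lieF (J : BnGACS E) (u : ∀ x, E.Fib x) : ∀ x, E.Fib x :=
  fun x => E.bracket J.u₀ (J.ap u) x - J.F x (E.bracket J.u₀ u x)

/-- The covariant derivative `(D_u 𝓕) v = D_u (𝓕 v) − 𝓕 (D_u v)`. -/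
def covF (J : BnGACS E) (D : GenConnection E.toCourantAlgebroid)
    (u v : ∀ x, E.Fib x) : ∀ x, E.Fib x :=
  fun x => D.D u (J.ap v) x - J.F x (D.D u v x)

end BnGACS

/-- A generalized (almost) complex structure on a Courant algebroid of even rank:
a `⟨·,·⟩`-skew-symmetric endomorphism `𝓙` with `𝓙² = −Id`, whose i-eigenbundle has
sections closed under the Dorfman bracket. -/
structure GenComplex (E : CourantAlgebroid m M) where
  J : ∀ x, E.Fib x →ₗ[ℝ] E.Fib x
  smooth : ∀ {u}, u ∈ E.secs → (fun x => J x (u x)) ∈ E.secs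
  skew : ∀ x u v, E.g x (J x u) v = - E.g x u (J x v)
  sq : ∀ x v, J x (J x v) = -v
  integrable : CourantAlgebroid.IntegrableF E J

end

variable {n : ℕ} {M : Type*} [TopologicalSpace M]
  [ChartedSpace (EuclideanSpace ℝ (Fin n)) M]
  [IsManifold (𝓡 n) ((⊤ : ℕ∞) : WithTop ℕ∞) M]

/-! The difference `θ = D̃ - D` of two `Bₙ`-Kähler connections is encoded at each point by the
trilinear form `c(u,v,w) = ⟨θ_u v, w⟩`. Metric compatibility makes `c` skew in `(v,w)`,
torsion-freeness makes its cyclic sum vanish, and `D𝓕 = D̃𝓕 = 0`, `DG = D̃G = 0` make it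
`𝓕`- and `G`-invariant in `(v,w)` and kill `u₀`. These identities alone force `θ` to be
tensorial. Cyclicity then forces the first argument into the same `G`-eigenbundle and the same
`𝓕`-type as the second, so that `c = Re sk(η₊ + η₋)` with `η_±` a multiple of the
complex-trilinear extension of `c` restricted to `E_{±,𝓕} × E_{±,𝓕} × Ē_{±,𝓕}`. -/

noncomputable section

open Complex

namespace LinearMap

variable {R : Type*} [CommSemiring R] {M₁ M₂ M₃ N₁ N₂ N₃ P : Type*}
  [AddCommMonoid M₁] [AddCommMonoid M₂] [AddCommMonoid M₃] [AddCommMonoid N₁]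
  [AddCommMonoid N₂] [AddCommMonoid N₃] [AddCommMonoid P]
  [Module R M₁] [Module R M₂] [Module R M₃] [Module R N₁] [Module R N₂] [Module R N₃]
  [Module R P]

def compl₁₂₃ (c : M₁ →ₗ[R] M₂ →ₗ[R] M₃ →ₗ[R] P) (f₁ : N₁ →ₗ[R] M₁) (f₂ : N₂ →ₗ[R] M₂)
    (f₃ : N₃ →ₗ[R] M₃) : N₁ →ₗ[R] N₂ →ₗ[R] N₃ →ₗ[R] P :=
  (c.compl₁₂ f₁ f₂).compr₂ (lcomp R P f₃)

@[simp]
theorem compl₁₂₃_apply (c : M₁ →ₗ[R] M₂ →ₗ[R] M₃ →ₗ[R] P) (f₁ : N₁ →ₗ[R] M₁)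
    (f₂ : N₂ →ₗ[R] M₂) (f₃ : N₃ →ₗ[R] M₃) (x : N₁) (y : N₂) (z : N₃) :
    c.compl₁₂₃ f₁ f₂ f₃ x y z = c (f₁ x) (f₂ y) (f₃ z) := rfl

end LinearMap

theorem LinearMap.apply_congr_of_ker_vanish {R Γ W Q : Type*} [CommRing R] [AddCommGroup Γ]
    [Module R Γ] [AddCommGroup W] [Module R W] [AddCommGroup Q] [Module R Q]
    (τ : Γ →ₗ[R] Γ →ₗ[R] Γ →ₗ[R] Q) (e : Γ →ₗ[R] W)
    (h₁ : ∀ u v w, e u = 0 → τ u v w = 0) (h₂ : ∀ u v w, e v = 0 → τ u v w = 0)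
    (h₃ : ∀ u v w, e w = 0 → τ u v w = 0) {u u' v v' w w' : Γ}
    (hu : e u = e u') (hv : e v = e v') (hw : e w = e w') : τ u v w = τ u' v' w' := by
  have k₁ := h₁ (u - u') v w (by rw [map_sub, hu, sub_self])
  have k₂ := h₂ u' (v - v') w (by rw [map_sub, hv, sub_self])
  have k₃ := h₃ u' v' (w - w') (by rw [map_sub, hw, sub_self])
  simp only [map_sub, LinearMap.sub_apply, sub_eq_zero] at k₁ k₂ k₃
  rw [k₁, k₂, k₃]

variable {V : Type*} [AddCommGroup V] [Module ℝ V]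

namespace LinearMap.IsProj

variable {S : Submodule ℝ V} {P : Module.End ℝ V}

theorem average_involution (hP : IsProj S P) {G : Module.End ℝ V} (hG : ∀ z, G (G z) = z)
    (hGS : ∀ a ∈ S, G a ∈ S) :
    IsProj S ((1 / 2 : ℝ) • (P + G * P * G)) ∧ Commute G ((1 / 2 : ℝ) • (P + G * P * G)) := by
  have happly : ∀ v, ((1 / 2 : ℝ) • (P + G * P * G)) v = (1 / 2 : ℝ) • (P v + G (P (G v))) :=
    fun v => rfl
  refine ⟨⟨fun v => ?_, fun a ha => ?_⟩, LinearMap.ext fun v => ?_⟩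
  · rw [happly]
    exact S.smul_mem _ (S.add_mem (hP.map_mem v) (hGS _ (hP.map_mem _)))
  · rw [happly, hP.map_id a ha, hP.map_id _ (hGS a ha), hG]
    module
  · simp only [Module.End.mul_apply, happly, map_smul, map_add, hG, add_comm]

/-- `F` is a complex structure on the range of `-F²` and vanishes on the range of `1 + F²`;
the two pieces of `P` are averaged separately. -/
theorem average_of_cube (hP : IsProj S P) {F : Module.End ℝ V} (hF : ∀ z, F (F (F z)) = -F z)
    (hFS : ∀ a ∈ S, F a ∈ S) :
    ∃ p, IsProj S p ∧ Commute F p ∧ ∀ A : Module.End ℝ V, Commute A F → Commute A P →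
      Commute A p := by
  set N : Module.End ℝ V := 1 + F * F
  have hN : ∀ v, N v = v + F (F v) := fun v => rfl
  refine ⟨N * P * N + (1 / 2 : ℝ) • (F * F * P * (F * F) - F * P * F),
    ⟨fun v => ?_, fun a ha => ?_⟩, LinearMap.ext fun v => ?_, fun A hAF hAP => ?_⟩
  · have hNS : ∀ a ∈ S, N a ∈ S := fun a ha => S.add_mem ha (hFS _ (hFS _ ha))
    exact S.add_mem (hNS _ (hP.map_mem _)) (S.smul_mem _ (S.sub_mem (hFS _ (hFS _ (hP.map_mem _)))
      (hFS _ (hP.map_mem _))))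
  · have hFFa := hFS _ (hFS _ ha)
    simp only [LinearMap.add_apply, LinearMap.smul_apply, LinearMap.sub_apply,
      Module.End.mul_apply, hN, map_add, hP.map_id _ ha, hP.map_id _ hFFa,
      hP.map_id _ (hFS _ ha), hF, map_neg]
    module
  · simp only [LinearMap.add_apply, LinearMap.smul_apply, LinearMap.sub_apply,
      Module.End.mul_apply, hN, map_add, map_sub, map_smul, map_neg, hF, add_neg_cancel,
      map_zero, add_zero, zero_add]
    module
  · have hAN : Commute A N := (Commute.one_right A).add_right (hAF.mul_right hAF)
    have hAFF := hAF.mul_right hAF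
    exact ((hAN.mul_right hAP).mul_right hAN).add_right
      ((((hAFF.mul_right hAP).mul_right hAFF).sub_right
        ((hAF.mul_right hAP).mul_right hAF)).smul_right _)

end LinearMap.IsProj

theorem Submodule.exists_isProj_commute (S : Submodule ℝ V) {F G : Module.End ℝ V}
    (hF : ∀ z, F (F (F z)) = -F z) (hG : ∀ z, G (G z) = z) (hFG : Commute F G)
    (hFS : ∀ a ∈ S, F a ∈ S) (hGS : ∀ a ∈ S, G a ∈ S) :
    ∃ p, LinearMap.IsProj S p ∧ Commute F p ∧ Commute G p := by
  obtain ⟨q, hq⟩ := S.exists_isCompl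
  have hP : LinearMap.IsProj S (S.projection q hq) :=
    ⟨projection_apply_mem hq, fun _ => projection_apply_of_mem_left hq⟩
  obtain ⟨hPG, hGPG⟩ := hP.average_involution hG hGS
  obtain ⟨p, hp, hFp, hA⟩ := hPG.average_of_cube hF hFS
  exact ⟨p, hp, hFp, hA G hFG.symm hGPG⟩

def LinearMap.ofRealTrilinear (c : V →ₗ[ℝ] V →ₗ[ℝ] V →ₗ[ℝ] ℝ) : V →ₗ[ℝ] V →ₗ[ℝ] V →ₗ[ℝ] ℂ :=
  c.compr₂ (LinearMap.compRight ℝ Complex.ofRealCLM.toLinearMap)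

@[simp]
theorem LinearMap.ofRealTrilinear_apply (c : V →ₗ[ℝ] V →ₗ[ℝ] V →ₗ[ℝ] ℝ) (x y z : V) :
    c.ofRealTrilinear x y z = c x y z := rfl

structure IsKaehlerConnectionDiff (F G : Module.End ℝ V) (c : V →ₗ[ℝ] V →ₗ[ℝ] V →ₗ[ℝ] ℝ) :
    Prop where
  skew : ∀ x y z, c x y z = -c x z y
  cyclic : ∀ x y z, c x y z + c y z x + c z x y = 0
  map_F : ∀ x y z, c x (F y) z = -c x y (F z)
  map_G : ∀ x y z, c x (G y) z = c x y (G z)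
  map_F_F : ∀ x y z, c x y (F (F z)) = -c x y z

/-- `η ∈ S²E_{+,F}* ⊗ Ē_{+,F}*`, extended by zero, where `E₊` is the `+1`-eigenspace of `G`
and `E_{+,F}` its intersection with the `i`-eigenspace of `F`. -/
structure IsSymTwoOneForm (F G : Module.End ℝ V) (η : V →ₗ[ℝ] V →ₗ[ℝ] V →ₗ[ℝ] ℂ) : Prop where
  symm : ∀ u v w, η u v w = η v u w
  map_F₁ : ∀ u v w, η (F u) v w = I * η u v w
  map_F₂ : ∀ u v w, η u (F v) w = I * η u v w
  map_F₃ : ∀ u v w, η u v (F w) = -(I * η u v w)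
  map_G₁ : ∀ u v w, η (G u) v w = η u v w
  map_G₂ : ∀ u v w, η u (G v) w = η u v w
  map_G₃ : ∀ u v w, η u v (G w) = η u v w

/-- For `c` as in `IsKaehlerConnectionDiff`, this is `½ c(x - iFx, y - iFy, z + iFz)` for the
complex-trilinear extension of `c`. -/
def holComponent (F : Module.End ℝ V) (c : V →ₗ[ℝ] V →ₗ[ℝ] V →ₗ[ℝ] ℝ) :
    V →ₗ[ℝ] V →ₗ[ℝ] V →ₗ[ℝ] ℂ :=
  c.ofRealTrilinear - (c.compl₁₂₃ F F LinearMap.id).ofRealTrilinear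
    - I • ((c.compl₁₂₃ F LinearMap.id LinearMap.id).ofRealTrilinear
      + (c.compl₁₂₃ LinearMap.id F LinearMap.id).ofRealTrilinear)

theorem holComponent_apply (F : Module.End ℝ V) (c : V →ₗ[ℝ] V →ₗ[ℝ] V →ₗ[ℝ] ℝ) (x y z : V) :
    holComponent F c x y z
      = (c x y z - c (F x) (F y) z : ℝ) - I * (c (F x) y z + c x (F y) z : ℝ) := by
  simp [holComponent, mul_add]

/-- `1 + G` is twice the projection onto `E₊`; `etaForm F (-G) c` is the `E₋` counterpart. -/
def etaForm (F G : Module.End ℝ V) (c : V →ₗ[ℝ] V →ₗ[ℝ] V →ₗ[ℝ] ℝ) :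
    V →ₗ[ℝ] V →ₗ[ℝ] V →ₗ[ℝ] ℂ :=
  (1 / 16 : ℂ) • (holComponent F c).compl₁₂₃ (1 + G) (1 + G) (1 + G)

theorem etaForm_apply (F G : Module.End ℝ V) (c : V →ₗ[ℝ] V →ₗ[ℝ] V →ₗ[ℝ] ℝ) (u v w : V) :
    etaForm F G c u v w = 1 / 16 * holComponent F c (u + G u) (v + G v) (w + G w) := by
  simp [etaForm]

namespace IsKaehlerConnectionDiff

variable {F G : Module.End ℝ V} {c : V →ₗ[ℝ] V →ₗ[ℝ] V →ₗ[ℝ] ℝ}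

theorem map_F_map_F (hc : IsKaehlerConnectionDiff F G c) (x y z : V) :
    c x (F y) (F z) = c x y z := by
  rw [hc.map_F, hc.map_F_F, neg_neg]

theorem map_F_F_left (hc : IsKaehlerConnectionDiff F G c) (x y z : V) :
    c (F (F x)) y z = -c x y z := by
  linear_combination hc.cyclic (F (F x)) y z + hc.cyclic x y z - hc.map_F_F y z x
    - hc.skew z (F (F x)) y + hc.map_F_F z y x - hc.skew z y x

theorem map_G_map_G (hc : IsKaehlerConnectionDiff F G c) (hG : ∀ z, G (G z) = z) (x y z : V) :
    c x (G y) (G z) = c x y z := by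
  rw [hc.map_G, hG]

theorem map_G_map_G_left (hc : IsKaehlerConnectionDiff F G c) (hG : ∀ z, G (G z) = z)
    (x y z : V) : c (G x) (G y) z = c x y z := by
  have h₁ := hc.cyclic (G x) (G y) z
  have h₂ := hc.cyclic (G y) (G z) x
  have h₃ := hc.cyclic (G z) (G x) y
  have h₄ := hc.cyclic x y z
  rw [hc.map_G_map_G hG] at h₁ h₂ h₃
  linear_combination (h₁ + hc.map_G (G y) z x - h₂ - hc.map_G (G z) x y + h₃
    + hc.map_G (G x) y z - h₄) / 2

theorem neg_G (hc : IsKaehlerConnectionDiff F G c) : IsKaehlerConnectionDiff F (-G) c where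
  __ := hc
  map_G x y z := by simp [hc.map_G]

theorem holComponent_comm (hc : IsKaehlerConnectionDiff F G c) (x y z : V) :
    holComponent F c x y z = holComponent F c y x z := by
  have hre : c x y z - c (F x) (F y) z = c y x z - c (F y) (F x) z := by
    linear_combination hc.cyclic x y z - hc.skew y z x - hc.cyclic (F x) (F y) z
      + hc.skew (F y) z (F x) + hc.map_F_map_F z x y
  have him : c (F x) y z + c x (F y) z = c (F y) x z + c y (F x) z := by
    linear_combination hc.cyclic (F x) y z - hc.skew y z (F x) + hc.cyclic x (F y) z
      - hc.skew (F y) z x - hc.map_F z x y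
  simp only [holComponent_apply, hre, him, add_comm]

theorem holComponent_map_F₁ (hc : IsKaehlerConnectionDiff F G c) (x y z : V) :
    holComponent F c (F x) y z = I * holComponent F c x y z := by
  rw [holComponent_apply, holComponent_apply, hc.map_F_F_left, hc.map_F_F_left]
  push_cast
  linear_combination ((c (F x) y z : ℂ) + c x (F y) z) * I_sq

theorem holComponent_map_F₃ (hc : IsKaehlerConnectionDiff F G c) (x y z : V) :
    holComponent F c x y (F z) = -(I * holComponent F c x y z) := by
  have e₁ : c x y (F z) = -c x (F y) z := by rw [hc.map_F, neg_neg]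
  have e₂ : c (F x) y (F z) = -c (F x) (F y) z := by rw [hc.map_F, neg_neg]
  rw [holComponent_apply, holComponent_apply, e₁, e₂, hc.map_F_map_F, hc.map_F_map_F]
  push_cast
  linear_combination -((c (F x) y z : ℂ) + c x (F y) z) * I_sq

theorem re_holComponent_sub (hc : IsKaehlerConnectionDiff F G c) (x y z : V) :
    (holComponent F c x y z - holComponent F c x z y).re = 2 * c x y z := by
  simp only [holComponent_apply, sub_re, mul_re, ofReal_re, ofReal_im, I_re, I_im]
  linear_combination -hc.skew x y z + hc.skew (F x) (F z) y - hc.map_F (F x) y z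

theorem apply_add_apply_sub (hc : IsKaehlerConnectionDiff F G c) (hG : ∀ z, G (G z) = z)
    (u v w : V) :
    c (u + G u) (v + G v) (w + G w) + c (u - G u) (v - G v) (w - G w) = 8 * c u v w := by
  simp only [map_add, map_sub, LinearMap.add_apply, LinearMap.sub_apply]
  linear_combination 2 * hc.map_G_map_G hG u v w + 4 * hc.map_G_map_G_left hG u v w
    - 2 * hc.map_G (G u) v w

theorem isSymTwoOneForm_etaForm (hc : IsKaehlerConnectionDiff F G c)
    (hFG : ∀ z, G (F z) = F (G z)) (hG : ∀ z, G (G z) = z) :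
    IsSymTwoOneForm F G (etaForm F G c) := by
  have hF : ∀ z, F z + G (F z) = F (z + G z) := fun z => by rw [hFG, map_add]
  have hG' : ∀ z, G z + G (G z) = z + G z := fun z => by rw [hG, add_comm]
  have symm : ∀ u v w, etaForm F G c u v w = etaForm F G c v u w := fun u v w => by
    rw [etaForm_apply, etaForm_apply, hc.holComponent_comm]
  have map_F₁ : ∀ u v w, etaForm F G c (F u) v w = I * etaForm F G c u v w := fun u v w => by
    rw [etaForm_apply, etaForm_apply, hF, hc.holComponent_map_F₁, mul_left_comm]
  refine ⟨symm, map_F₁, fun u v w => ?_, fun u v w => ?_, fun u v w => ?_, fun u v w => ?_,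
    fun u v w => ?_⟩
  · rw [symm, map_F₁, symm]
  · rw [etaForm_apply, etaForm_apply, hF, hc.holComponent_map_F₃, mul_neg, mul_left_comm]
  all_goals rw [etaForm_apply, etaForm_apply, hG']

theorem re_sk_etaForm_add (hc : IsKaehlerConnectionDiff F G c) (hG : ∀ z, G (G z) = z)
    (u v w : V) :
    c u v w = ((etaForm F G c u v w - etaForm F G c u w v)
      + (etaForm F (-G) c u v w - etaForm F (-G) c u w v)).re := by
  have hp := hc.re_holComponent_sub (u + G u) (v + G v) (w + G w)
  have hm := hc.re_holComponent_sub (u - G u) (v - G v) (w - G w)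
  simp only [etaForm_apply, LinearMap.neg_apply, ← sub_eq_add_neg, ← mul_sub, ← mul_add,
    mul_re, add_re, hp, hm, div_ofNat_re, div_ofNat_im, one_re, one_im, zero_div, zero_mul,
    sub_zero]
  linarith [hc.apply_add_apply_sub hG u v w]

end IsKaehlerConnectionDiff

namespace BnGACS

variable {E : OddExactCourantAlgebroid n M} (J : BnGACS E) (x : M)

theorem F_F_u₀ : J.F x (J.F x (J.u₀ x)) = 0 := by
  rw [J.F_sq, J.u₀_norm, ← pow_add, ← two_mul, pow_mul, neg_one_sq, one_pow, one_smul,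
    neg_add_cancel]

theorem F_u₀ : J.F x (J.u₀ x) = 0 := by
  have horth : E.g x (J.F x (J.u₀ x)) (J.u₀ x) = 0 := by
    linarith [J.skew x (J.u₀ x) (J.u₀ x), E.g_symm x (J.u₀ x) (J.F x (J.u₀ x))]
  have h := J.F_sq x (J.F x (J.u₀ x))
  rw [J.F_F_u₀, map_zero, horth, mul_zero, zero_smul, add_zero, zero_eq_neg] at h
  exact h

theorem F_F_F (v : E.Fib x) : J.F x (J.F x (J.F x v)) = -J.F x v := by
  rw [J.F_sq, J.skew, J.F_u₀, map_zero, neg_zero, mul_zero, zero_smul, add_zero]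

end BnGACS

namespace CourantAlgebroid

variable (E : CourantAlgebroid n M)

def sections : Submodule ℝ (∀ x, E.Fib x) where
  carrier := E.secs
  add_mem' := E.secs_add
  zero_mem' := E.secs_zero
  smul_mem' _ _ hu := E.secs_smul contMDiff_const hu

def evalAt (x : M) : E.sections →ₗ[ℝ] E.Fib x :=
  (LinearMap.proj x).comp E.sections.subtype

@[simp]
theorem evalAt_apply (x : M) (u : E.sections) : E.evalAt x u = (u : ∀ x, E.Fib x) x := rfl

variable {E}

def sectionMap (F : ∀ x, E.Fib x →ₗ[ℝ] E.Fib x)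
    (hF : ∀ {u}, u ∈ E.secs → (fun x => F x (u x)) ∈ E.secs) : Module.End ℝ E.sections :=
  (LinearMap.pi fun x => F x ∘ₗ LinearMap.proj x).restrict fun _ hu => hF hu

@[simp]
theorem evalAt_sectionMap (F : ∀ x, E.Fib x →ₗ[ℝ] E.Fib x)
    (hF : ∀ {u}, u ∈ E.secs → (fun x => F x (u x)) ∈ E.secs) (x : M) (u : E.sections) :
    E.evalAt x (sectionMap F hF u) = F x (E.evalAt x u) := rfl

theorem map_mem_range_evalAt (F : ∀ x, E.Fib x →ₗ[ℝ] E.Fib x)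
    (hF : ∀ {u}, u ∈ E.secs → (fun x => F x (u x)) ∈ E.secs) {x : M} {a : E.Fib x}
    (ha : a ∈ LinearMap.range (E.evalAt x)) : F x a ∈ LinearMap.range (E.evalAt x) := by
  obtain ⟨u, rfl⟩ := ha
  exact ⟨sectionMap F hF u, rfl⟩

/-- The values of sections at `x` need not span the fibre, so the lift is built from a
projection onto their span that commutes with `F x` and `G x`. -/
theorem exists_equivariant_lift {F G : ∀ x, E.Fib x →ₗ[ℝ] E.Fib x}
    (hF : ∀ {u}, u ∈ E.secs → (fun x => F x (u x)) ∈ E.secs)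
    (hG : ∀ {u}, u ∈ E.secs → (fun x => G x (u x)) ∈ E.secs) (x : M)
    (hF3 : ∀ v, F x (F x (F x v)) = -F x v) (hG2 : ∀ v, G x (G x v) = v)
    (hFG : ∀ v, G x (F x v) = F x (G x v)) :
    ∃ s : E.Fib x →ₗ[ℝ] E.sections, (∀ u, E.evalAt x (s (E.evalAt x u)) = E.evalAt x u) ∧
      (∀ a, E.evalAt x (s (F x a)) = E.evalAt x (sectionMap F hF (s a))) ∧
      (∀ a, E.evalAt x (s (G x a)) = E.evalAt x (sectionMap G hG (s a))) := by
  obtain ⟨p, hp, hFp, hGp⟩ := (LinearMap.range (E.evalAt x)).exists_isProj_commute hF3 hG2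
    (LinearMap.ext fun v => (hFG v).symm) (fun _ => map_mem_range_evalAt F hF)
    (fun _ => map_mem_range_evalAt G hG)
  obtain ⟨s, hs⟩ := Module.projective_lifting_property (E.evalAt x).rangeRestrict hp.codRestrict
    (E.evalAt x).surjective_rangeRestrict
  have hps : ∀ a, E.evalAt x (s a) = p a := fun a => congrArg Subtype.val (LinearMap.congr_fun hs a)
  refine ⟨s, fun u => ?_, fun a => ?_, fun a => ?_⟩
  · rw [hps, hp.map_id _ (LinearMap.mem_range_self _ u)]
  · rw [hps, evalAt_sectionMap, hps]
    exact (LinearMap.congr_fun hFp a).symm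
  · rw [hps, evalAt_sectionMap, hps]
    exact (LinearMap.congr_fun hGp a).symm

end CourantAlgebroid

def BnGACS.u₀Sec {E : OddExactCourantAlgebroid n M} (J : BnGACS E) : E.sections :=
  ⟨J.u₀, J.u₀_mem⟩

namespace GenConnection

variable {E : CourantAlgebroid n M}

def applyAt (D : GenConnection E) (x : M) : E.sections →ₗ[ℝ] E.sections →ₗ[ℝ] E.Fib x :=
  LinearMap.mk₂ ℝ (fun u v => D.D u v x)
    (fun u u' v => congrFun (D.add_dir u.2 u'.2 v.2) x)
    (fun _ u v => congrFun (D.smul_dir contMDiff_const u.2 v.2) x)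
    (fun u v v' => congrFun (D.add_sec u.2 v.2 v'.2) x)
    (fun c u v => congrFun (D.smul_sec c u.2 v.2) x)

@[simp]
theorem applyAt_apply (D : GenConnection E) (x : M) (u v : E.sections) :
    D.applyAt x u v = D.D u v x := rfl

def diffForm (D D' : GenConnection E) (x : M) :
    E.sections →ₗ[ℝ] E.sections →ₗ[ℝ] E.sections →ₗ[ℝ] ℝ :=
  (D'.applyAt x - D.applyAt x).compr₂ ((E.g x).compl₂ (E.evalAt x))

variable (D D' : GenConnection E) (x : M)

theorem diffForm_apply (u v w : E.sections) :
    D.diffForm D' x u v w = E.g x (D'.D u v x - D.D u v x) (E.evalAt x w) := rfl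

theorem diffForm_skew (u v w : E.sections) : D.diffForm D' x u v w = -D.diffForm D' x u w v := by
  have h := (D.metric v.2 w.2 u.2 x).symm.trans (D'.metric v.2 w.2 u.2 x)
  rw [E.g_symm x _ (D.D u w x), E.g_symm x _ (D'.D u w x)] at h
  simp only [diffForm_apply, CourantAlgebroid.evalAt_apply, map_sub, LinearMap.sub_apply]
  linarith

variable {D D'}

theorem diffForm_cyclic (hD : D.TorsionFree) (hD' : D'.TorsionFree) (u v w : E.sections) :
    D.diffForm D' x u v w + D.diffForm D' x v w u + D.diffForm D' x w u v = 0 := by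
  have h := hD u.2 v.2 w.2 x
  have h' := hD' u.2 v.2 w.2 x
  rw [D.diffForm_skew D' x v w u]
  simp only [torsion, map_sub, LinearMap.sub_apply] at h h'
  simp only [diffForm_apply, CourantAlgebroid.evalAt_apply, map_sub, LinearMap.sub_apply]
  linarith

theorem diffForm_congr (hD : D.TorsionFree) (hD' : D'.TorsionFree) {u u' v v' w w' : E.sections}
    (hu : E.evalAt x u = E.evalAt x u') (hv : E.evalAt x v = E.evalAt x v')
    (hw : E.evalAt x w = E.evalAt x w') :
    D.diffForm D' x u v w = D.diffForm D' x u' v' w' := by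
  have h₃ : ∀ u v w : E.sections, E.evalAt x w = 0 → D.diffForm D' x u v w = 0 := fun u v w hw => by
    rw [diffForm_apply, hw, map_zero]
  have h₂ : ∀ u v w : E.sections, E.evalAt x v = 0 → D.diffForm D' x u v w = 0 := fun u v w hv => by
    rw [diffForm_skew, h₃ u w v hv, neg_zero]
  refine LinearMap.apply_congr_of_ker_vanish _ (E.evalAt x) (fun u v w hu => ?_) h₂ h₃ hu hv hw
  linear_combination diffForm_cyclic x hD hD' u v w - h₃ v w u hu - h₂ w u v hu

theorem applyAt_sectionMap {C : GenConnection E} {F : ∀ x, E.Fib x →ₗ[ℝ] E.Fib x}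
    (hF : ∀ {u}, u ∈ E.secs → (fun x => F x (u x)) ∈ E.secs) (hC : C.PreservesEnd F)
    (u v : E.sections) :
    C.applyAt x u (CourantAlgebroid.sectionMap F hF v) = F x (C.applyAt x u v) :=
  hC u.2 v.2 x

theorem diffForm_sectionMap_skew {F : ∀ x, E.Fib x →ₗ[ℝ] E.Fib x}
    (hF : ∀ {u}, u ∈ E.secs → (fun x => F x (u x)) ∈ E.secs)
    (hskew : ∀ a b, E.g x (F x a) b = -E.g x a (F x b))
    (hD : D.PreservesEnd F) (hD' : D'.PreservesEnd F) (u v w : E.sections) :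
    D.diffForm D' x u (CourantAlgebroid.sectionMap F hF v) w
      = -D.diffForm D' x u v (CourantAlgebroid.sectionMap F hF w) := by
  have h := applyAt_sectionMap x hF hD u v
  have h' := applyAt_sectionMap x hF hD' u v
  simp only [applyAt_apply] at h h'
  rw [diffForm_apply, diffForm_apply, h, h', ← map_sub, hskew,
    CourantAlgebroid.evalAt_sectionMap]

theorem PreservesMetric.g_D_gend {C : GenConnection E} {G : GenMetric E} (hC : C.PreservesMetric G)
    {u v w : ∀ x, E.Fib x} (hu : u ∈ E.secs) (hv : v ∈ E.secs) (hw : w ∈ E.secs) :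
    E.g x (C.D u (fun y => G.Gend y (v y)) x) (w x) = E.g x (G.Gend x (C.D u v x)) (w x) := by
  linarith [(C.metric (G.smooth hv) hw hu x).symm.trans (hC hv hw hu x)]

theorem diffForm_gend {G : GenMetric E} (hD : D.PreservesMetric G) (hD' : D'.PreservesMetric G)
    (u v w : E.sections) :
    D.diffForm D' x u (CourantAlgebroid.sectionMap G.Gend G.smooth v) w
      = D.diffForm D' x u v (CourantAlgebroid.sectionMap G.Gend G.smooth w) := by
  rw [diffForm_apply, diffForm_apply, CourantAlgebroid.evalAt_sectionMap, ← G.symm]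
  simp only [map_sub, LinearMap.sub_apply]
  exact congrArg₂ _ (hD'.g_D_gend x u.2 v.2 w.2) (hD.g_D_gend x u.2 v.2 w.2)

end GenConnection

namespace GenConnection

variable {E : OddExactCourantAlgebroid n M} (J : BnGACS E)
  {D D' : GenConnection E.toCourantAlgebroid} (x : M)

theorem diffForm_u₀ (hD : D.PreservesEnd J.F) (hD' : D'.PreservesEnd J.F) (u v : E.sections) :
    D.diffForm D' x u v J.u₀Sec = 0 := by
  set u₀ := J.u₀Sec
  set θ := D'.applyAt x u u₀ - D.applyAt x u u₀
  have hJJ : CourantAlgebroid.sectionMap J.F J.smooth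
      (CourantAlgebroid.sectionMap J.F J.smooth u₀) = 0 :=
    Subtype.ext (funext J.F_F_u₀)
  have hFFθ : J.F x (J.F x θ) = 0 := by
    simp only [θ, map_sub, ← applyAt_sectionMap x J.smooth hD, ← applyAt_sectionMap x J.smooth hD',
      hJJ, map_zero, sub_zero]
  have hθu₀ : E.g x θ (J.u₀ x) = 0 := by
    have h : E.g x θ (J.u₀ x) = -E.g x θ (J.u₀ x) := D.diffForm_skew D' x u u₀ u₀
    linarith
  have hθ : θ = 0 := by
    have h := J.F_sq x θ
    rwa [hFFθ, hθu₀, mul_zero, zero_smul, add_zero, zero_eq_neg] at h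
  have h : D.diffForm D' x u v u₀ = -E.g x θ (E.evalAt x v) := D.diffForm_skew D' x u v u₀
  rw [h, hθ, map_zero, LinearMap.zero_apply, neg_zero]

theorem diffForm_sectionMap_sq (hD : D.PreservesEnd J.F) (hD' : D'.PreservesEnd J.F)
    (u v w : E.sections) :
    D.diffForm D' x u v (CourantAlgebroid.sectionMap J.F J.smooth
      (CourantAlgebroid.sectionMap J.F J.smooth w)) = -D.diffForm D' x u v w := by
  have h : E.g x (D'.D u v x - D.D u v x) (J.u₀ x) = 0 := diffForm_u₀ J x hD hD' u v
  rw [diffForm_apply, diffForm_apply, CourantAlgebroid.evalAt_sectionMap,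
    CourantAlgebroid.evalAt_sectionMap, J.F_sq, map_add, map_neg, map_smul, h, smul_zero,
    add_zero]

theorem exists_isKaehlerConnectionDiff (G : GenMetric E.toCourantAlgebroid)
    (hcomm : ∀ x v, G.Gend x (J.F x v) = J.F x (G.Gend x v))
    (hD : D.TorsionFree ∧ D.PreservesMetric G ∧ D.PreservesEnd J.F)
    (hD' : D'.TorsionFree ∧ D'.PreservesMetric G ∧ D'.PreservesEnd J.F) :
    ∃ c : E.Fib x →ₗ[ℝ] E.Fib x →ₗ[ℝ] E.Fib x →ₗ[ℝ] ℝ,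
      IsKaehlerConnectionDiff (J.F x) (G.Gend x) c ∧ ∀ u v w : E.sections,
        c (E.evalAt x u) (E.evalAt x v) (E.evalAt x w) = D.diffForm D' x u v w := by
  obtain ⟨hDtor, hDG, hDF⟩ := hD
  obtain ⟨hD'tor, hD'G, hD'F⟩ := hD'
  obtain ⟨s, hs, hsF, hsG⟩ := CourantAlgebroid.exists_equivariant_lift J.smooth G.smooth x
    (J.F_F_F x) (G.invol x) (hcomm x)
  have hsFF : ∀ a, E.evalAt x (s (J.F x (J.F x a))) = E.evalAt x
      (CourantAlgebroid.sectionMap J.F J.smooth (CourantAlgebroid.sectionMap J.F J.smooth (s a))) :=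
    fun a => by rw [hsF, CourantAlgebroid.evalAt_sectionMap, hsF]; rfl
  have hτ := fun {u u' v v' w w'} => diffForm_congr (D := D) (D' := D') (u := u) (u' := u')
    (v := v) (v' := v') (w := w) (w' := w') x hDtor hD'tor
  refine ⟨(D.diffForm D' x).compl₁₂₃ s s s, ⟨fun a b e => ?_, fun a b e => ?_, fun a b e => ?_,
    fun a b e => ?_, fun a b e => ?_⟩, fun u v w => hτ (hs u) (hs v) (hs w)⟩
  · exact diffForm_skew D D' x _ _ _
  · exact diffForm_cyclic x hDtor hD'tor _ _ _
  · simp only [LinearMap.compl₁₂₃_apply]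
    rw [hτ rfl (hsF b) rfl, diffForm_sectionMap_skew x J.smooth (J.skew x) hDF hD'F,
      hτ rfl rfl (hsF e).symm]
  · simp only [LinearMap.compl₁₂₃_apply]
    rw [hτ rfl (hsG b) rfl, diffForm_gend x hDG hD'G, hτ rfl rfl (hsG e).symm]
  · simp only [LinearMap.compl₁₂₃_apply]
    rw [hτ rfl rfl (hsFF e), diffForm_sectionMap_sq J x hDF hD'F]

end GenConnection

end

/-- The `η_±` are families of ℝ-trilinear complex-valued forms; the `𝓕`-conditions place each
argument in `L` resp. `L̄`, and the `G^end`-conditions place the arguments of `η_±` in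
`E_±^ℂ`. -/
theorem bn_kaehler_connections_difference_general
    (E : OddExactCourantAlgebroid n M) (J : BnGACS E)
    (G : GenMetric E.toCourantAlgebroid)
    (hcomm : ∀ x v, G.Gend x (J.F x v) = J.F x (G.Gend x v))
    (D Dt : GenConnection E.toCourantAlgebroid)
    (hD : D.TorsionFree ∧ D.PreservesMetric G ∧ D.PreservesEnd J.F)
    (hDt : Dt.TorsionFree ∧ Dt.PreservesMetric G ∧ Dt.PreservesEnd J.F) :
    ∃ ηp ηm : ∀ x, E.Fib x →ₗ[ℝ] E.Fib x →ₗ[ℝ] E.Fib x →ₗ[ℝ] ℂ,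
      (∀ x u v w, ηp x u v w = ηp x v u w) ∧
      (∀ x u v w, ηp x (J.F x u) v w = Complex.I * ηp x u v w) ∧
      (∀ x u v w, ηp x u (J.F x v) w = Complex.I * ηp x u v w) ∧
      (∀ x u v w, ηp x u v (J.F x w) = -(Complex.I * ηp x u v w)) ∧
      (∀ x u v w, ηp x (G.Gend x u) v w = ηp x u v w) ∧
      (∀ x u v w, ηp x u (G.Gend x v) w = ηp x u v w) ∧
      (∀ x u v w, ηp x u v (G.Gend x w) = ηp x u v w) ∧
      (∀ x u v w, ηm x u v w = ηm x v u w) ∧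
      (∀ x u v w, ηm x (J.F x u) v w = Complex.I * ηm x u v w) ∧
      (∀ x u v w, ηm x u (J.F x v) w = Complex.I * ηm x u v w) ∧
      (∀ x u v w, ηm x u v (J.F x w) = -(Complex.I * ηm x u v w)) ∧
      (∀ x u v w, ηm x (G.Gend x u) v w = -(ηm x u v w)) ∧
      (∀ x u v w, ηm x u (G.Gend x v) w = -(ηm x u v w)) ∧
      (∀ x u v w, ηm x u v (G.Gend x w) = -(ηm x u v w)) ∧
      ∀ u v w, u ∈ E.secs → v ∈ E.secs → w ∈ E.secs → ∀ x,
        E.g x (Dt.D u v x) (w x)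
          = E.g x (D.D u v x) (w x)
            + ((ηp x (u x) (v x) (w x) - ηp x (u x) (w x) (v x))
                + (ηm x (u x) (v x) (w x) - ηm x (u x) (w x) (v x))).re := by
  choose c hc hcD using fun x => GenConnection.exists_isKaehlerConnectionDiff J x G hcomm hD hDt
  have hηp x := (hc x).isSymTwoOneForm_etaForm (hcomm x) (G.invol x)
  have hηm x := (hc x).neg_G.isSymTwoOneForm_etaForm (fun z => by simp [hcomm])
    (fun z => by simp [G.invol])
  refine ⟨fun x => etaForm (J.F x) (G.Gend x) (c x), fun x => etaForm (J.F x) (-G.Gend x) (c x),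
    fun x => (hηp x).symm, fun x => (hηp x).map_F₁, fun x => (hηp x).map_F₂,
    fun x => (hηp x).map_F₃, fun x => (hηp x).map_G₁, fun x => (hηp x).map_G₂,
    fun x => (hηp x).map_G₃, fun x => (hηm x).symm, fun x => (hηm x).map_F₁,
    fun x => (hηm x).map_F₂, fun x => (hηm x).map_F₃, fun x u v w => ?_, fun x u v w => ?_,
    fun x u v w => ?_, fun u v w hu hv hw x => ?_⟩
  · simpa [neg_eq_iff_eq_neg] using (hηm x).map_G₁ u v w
  · simpa [neg_eq_iff_eq_neg] using (hηm x).map_G₂ u v w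
  · simpa [neg_eq_iff_eq_neg] using (hηm x).map_G₃ u v w
  · have h := hcD x ⟨u, hu⟩ ⟨v, hv⟩ ⟨w, hw⟩
    rw [GenConnection.diffForm_apply, map_sub, LinearMap.sub_apply] at h
    rw [← (hc x).re_sk_etaForm_add (G.invol x)]
    exact eq_add_of_sub_eq' h.symm

/-- Let `(G,𝓕)` be a `Bₙ`-generalized pseudo-Kähler structure on an
odd exact Courant algebroid `E`.  Any two `Bₙ`-Kähler generalized connections `D, D̃`
(torsion-free with `DG = 0` and `D𝓕 = 0`) are related by `D̃ = D + Re(sk(η₊ + η₋))`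
for some `η_± ∈ Γ(S²E_{±,𝓕}* ⊗ Ē_{±,𝓕}*)`, where `E_{±,𝓕} = E_±^ℂ ∩ L`.  The `η_±`
are encoded as families of ℝ-trilinear complex-valued forms; the `𝓕`-conditions place
each argument in `L` resp. `L̄`, and the `G^end`-conditions place the arguments of
`η_±` in `E_±^ℂ` (extension by zero via
`E^ℂ = E_{+,𝓕} ⊕ Ē_{+,𝓕} ⊕ E_{−,𝓕} ⊕ Ē_{−,𝓕} ⊕ U^ℂ`). -/
theorem bn_kaehler_connections_difference
    (E : OddExactCourantAlgebroid n M) (J : BnGACS E)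
    (G : GenMetric E.toCourantAlgebroid)
    (hcomm : ∀ x v, G.Gend x (J.F x v) = J.F x (G.Gend x v))
    (hint₁ : CourantAlgebroid.IntegrableF E.toCourantAlgebroid J.F)
    (hint₂ : CourantAlgebroid.IntegrableF E.toCourantAlgebroid
      (fun x => (G.Gend x) ∘ₗ (J.F x)))
    (D Dt : GenConnection E.toCourantAlgebroid)
    (hD : D.TorsionFree ∧ D.PreservesMetric G ∧ D.PreservesEnd J.F)
    (hDt : Dt.TorsionFree ∧ Dt.PreservesMetric G ∧ Dt.PreservesEnd J.F) :
    ∃ ηp ηm : ∀ x, E.Fib x →ₗ[ℝ] E.Fib x →ₗ[ℝ] E.Fib x →ₗ[ℝ] ℂ,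
      (∀ x u v w, ηp x u v w = ηp x v u w) ∧
      (∀ x u v w, ηp x (J.F x u) v w = Complex.I * ηp x u v w) ∧
      (∀ x u v w, ηp x u (J.F x v) w = Complex.I * ηp x u v w) ∧
      (∀ x u v w, ηp x u v (J.F x w) = -(Complex.I * ηp x u v w)) ∧
      (∀ x u v w, ηp x (G.Gend x u) v w = ηp x u v w) ∧
      (∀ x u v w, ηp x u (G.Gend x v) w = ηp x u v w) ∧
      (∀ x u v w, ηp x u v (G.Gend x w) = ηp x u v w) ∧
      (∀ x u v w, ηm x u v w = ηm x v u w) ∧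
      (∀ x u v w, ηm x (J.F x u) v w = Complex.I * ηm x u v w) ∧
      (∀ x u v w, ηm x u (J.F x v) w = Complex.I * ηm x u v w) ∧
      (∀ x u v w, ηm x u v (J.F x w) = -(Complex.I * ηm x u v w)) ∧
      (∀ x u v w, ηm x (G.Gend x u) v w = -(ηm x u v w)) ∧
      (∀ x u v w, ηm x u (G.Gend x v) w = -(ηm x u v w)) ∧
      (∀ x u v w, ηm x u v (G.Gend x w) = -(ηm x u v w)) ∧
      ∀ u v w, u ∈ E.secs → v ∈ E.secs → w ∈ E.secs → ∀ x,
        E.g x (Dt.D u v x) (w x)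
          = E.g x (D.D u v x) (w x)
            + ((ηp x (u x) (v x) (w x) - ηp x (u x) (w x) (v x))
                + (ηm x (u x) (v x) (w x) - ηm x (u x) (w x) (v x))).re :=
  bn_kaehler_connections_difference_general E J G hcomm D Dt hD hDt
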